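/- arXiv:1801.08586 — 4 statements merged into one kernel-verified Lean document; each statement's English description precedes it below -/
import Mathlib

section
/- For every positive integer n, any finite sequence of n real numbers can be partitioned into at most (1 + sqrt(3/2)) * sqrt(n) monotonic subsequences (each subsequence either monotonically non-decreasing or monotonically non-increasing). -/
namespace Stmt0Aux

variable {n : ℕ}

/-- Strictly increasing chains (as index sets). -/
def IncChain (a : Fin n → ℝ) (t : Finset (Fin n)) : Prop :=
  ∀ x ∈ t, ∀ y ∈ t, x < y → a x < a y

/-- Nonincreasing chains (as index sets). -/
def DecChain (a : Fin n → ℝ) (t : Finset (Fin n)) : Prop :=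
  ∀ x ∈ t, ∀ y ∈ t, x < y → a y ≤ a x

lemma IncChain.monotoneOn {a : Fin n → ℝ} {t : Finset (Fin n)} (h : IncChain a t) :
    MonotoneOn a ↑t := by
  intro x hx y hy hxy
  rcases lt_or_eq_of_le hxy with h' | h'
  · exact (h x hx y hy h').le
  · subst h'; rfl

lemma DecChain.antitoneOn {a : Fin n → ℝ} {t : Finset (Fin n)} (h : DecChain a t) :
    AntitoneOn a ↑t := by
  intro x hx y hy hxy
  rcases lt_or_eq_of_le hxy with h' | h'
  · exact h x hx y hy h'
  · subst h'; rfl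

open Classical in
/-- Chains inside `s` satisfying predicate `C`, with maximum element `i`. -/
noncomputable def chainsUpTo (s : Finset (Fin n)) (C : Finset (Fin n) → Prop) (i : Fin n) :
    Finset (Finset (Fin n)) :=
  s.powerset.filter (fun t => i ∈ t ∧ (∀ j ∈ t, j ≤ i) ∧ C t)

lemma mem_chainsUpTo {s : Finset (Fin n)} {C : Finset (Fin n) → Prop} {i : Fin n}
    {t : Finset (Fin n)} :
    t ∈ chainsUpTo s C i ↔ t ⊆ s ∧ i ∈ t ∧ (∀ j ∈ t, j ≤ i) ∧ C t := by
  simp [chainsUpTo, Finset.mem_filter, Finset.mem_powerset, and_assoc]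

/-- Length of the longest `C`-chain inside `s` ending at `i`. -/
noncomputable def chainLen (s : Finset (Fin n)) (C : Finset (Fin n) → Prop) (i : Fin n) : ℕ :=
  (chainsUpTo s C i).sup Finset.card

lemma singleton_mem_chainsUpTo {a : Fin n → ℝ} {s : Finset (Fin n)} {i : Fin n} (hi : i ∈ s) :
    ({i} : Finset (Fin n)) ∈ chainsUpTo s (IncChain a) i ∧
    ({i} : Finset (Fin n)) ∈ chainsUpTo s (DecChain a) i := by
  constructor <;>
  · rw [mem_chainsUpTo]
    refine ⟨Finset.singleton_subset_iff.2 hi, Finset.mem_singleton_self i, ?_, ?_⟩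
    · intro j hj; rw [Finset.mem_singleton] at hj; exact hj.le
    · intro x hx y hy hxy
      rw [Finset.mem_singleton] at hx hy
      subst hx; subst hy; exact absurd hxy (lt_irrefl _)

lemma chainsUpTo_nonempty_inc {a : Fin n → ℝ} {s : Finset (Fin n)} {i : Fin n} (hi : i ∈ s) :
    (chainsUpTo s (IncChain a) i).Nonempty :=
  ⟨_, (singleton_mem_chainsUpTo hi).1⟩

lemma chainsUpTo_nonempty_dec {a : Fin n → ℝ} {s : Finset (Fin n)} {i : Fin n} (hi : i ∈ s) :
    (chainsUpTo s (DecChain a) i).Nonempty :=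
  ⟨_, (singleton_mem_chainsUpTo hi).2⟩

lemma one_le_chainLen_inc {a : Fin n → ℝ} {s : Finset (Fin n)} {i : Fin n} (hi : i ∈ s) :
    1 ≤ chainLen s (IncChain a) i := by
  have h1 : ({i} : Finset (Fin n)).card ≤ chainLen s (IncChain a) i :=
    Finset.le_sup (f := Finset.card) (singleton_mem_chainsUpTo (a := a) hi).1
  simpa only [Finset.card_singleton] using h1

lemma one_le_chainLen_dec {a : Fin n → ℝ} {s : Finset (Fin n)} {i : Fin n} (hi : i ∈ s) :
    1 ≤ chainLen s (DecChain a) i := by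
  have h1 : ({i} : Finset (Fin n)).card ≤ chainLen s (DecChain a) i :=
    Finset.le_sup (f := Finset.card) (singleton_mem_chainsUpTo (a := a) hi).2
  simpa only [Finset.card_singleton] using h1

lemma exists_chain_eq_chainLen {s : Finset (Fin n)} {C : Finset (Fin n) → Prop} {i : Fin n}
    (h : (chainsUpTo s C i).Nonempty) :
    ∃ t ∈ chainsUpTo s C i, t.card = chainLen s C i := by
  obtain ⟨t, ht, h'⟩ := Finset.exists_mem_eq_sup _ h Finset.card
  exact ⟨t, ht, h'.symm⟩

lemma chainLen_lt_inc {a : Fin n → ℝ} {s : Finset (Fin n)} {i j : Fin n}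
    (hi : i ∈ s) (hj : j ∈ s) (hij : i < j) (hab : a i < a j) :
    chainLen s (IncChain a) i < chainLen s (IncChain a) j := by
  obtain ⟨t, ht, hcard⟩ := exists_chain_eq_chainLen (chainsUpTo_nonempty_inc (a := a) hi)
  rw [mem_chainsUpTo] at ht
  obtain ⟨hts, hit, hle, hchain⟩ := ht
  have hjt : j ∉ t := fun h => absurd hij (not_lt.2 (hle j h))
  have hmem : insert j t ∈ chainsUpTo s (IncChain a) j := by
    rw [mem_chainsUpTo]
    refine ⟨Finset.insert_subset hj hts, Finset.mem_insert_self _ _, ?_, ?_⟩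
    · intro k hk
      rcases Finset.mem_insert.1 hk with h | h
      · exact h.le
      · exact (hle k h).trans hij.le
    · intro x hx y hy hxy
      rcases Finset.mem_insert.1 hx with hx' | hx' <;>
        rcases Finset.mem_insert.1 hy with hy' | hy'
      · subst hx'; subst hy'; exact absurd hxy (lt_irrefl _)
      · subst hx'
        exact absurd hxy (not_lt.2 ((hle y hy').trans hij.le))
      · subst hy'
        rcases lt_or_eq_of_le (hle x hx') with h' | h'
        · exact (hchain x hx' i hit h').trans hab
        · rw [show x = i from Fin.ext (by exact_mod_cast congrArg Fin.val h')]
          exact hab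
      · exact hchain x hx' y hy' hxy
  have : t.card + 1 ≤ chainLen s (IncChain a) j := by
    have h1 := Finset.le_sup (f := Finset.card) hmem
    rwa [Finset.card_insert_of_notMem hjt] at h1
  omega

lemma chainLen_lt_dec {a : Fin n → ℝ} {s : Finset (Fin n)} {i j : Fin n}
    (hi : i ∈ s) (hj : j ∈ s) (hij : i < j) (hab : a j ≤ a i) :
    chainLen s (DecChain a) i < chainLen s (DecChain a) j := by
  obtain ⟨t, ht, hcard⟩ := exists_chain_eq_chainLen (chainsUpTo_nonempty_dec (a := a) hi)
  rw [mem_chainsUpTo] at ht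
  obtain ⟨hts, hit, hle, hchain⟩ := ht
  have hjt : j ∉ t := fun h => absurd hij (not_lt.2 (hle j h))
  have hmem : insert j t ∈ chainsUpTo s (DecChain a) j := by
    rw [mem_chainsUpTo]
    refine ⟨Finset.insert_subset hj hts, Finset.mem_insert_self _ _, ?_, ?_⟩
    · intro k hk
      rcases Finset.mem_insert.1 hk with h | h
      · exact h.le
      · exact (hle k h).trans hij.le
    · intro x hx y hy hxy
      rcases Finset.mem_insert.1 hx with hx' | hx' <;>
        rcases Finset.mem_insert.1 hy with hy' | hy'
      · subst hx'; subst hy'; exact absurd hxy (lt_irrefl _)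
      · subst hx'
        exact absurd hxy (not_lt.2 ((hle y hy').trans hij.le))
      · subst hy'
        rcases lt_or_eq_of_le (hle x hx') with h' | h'
        · exact hab.trans (hchain x hx' i hit h')
        · rw [show x = i from Fin.ext (by exact_mod_cast congrArg Fin.val h')]
          exact hab
      · exact hchain x hx' y hy' hxy
  have : t.card + 1 ≤ chainLen s (DecChain a) j := by
    have h1 := Finset.le_sup (f := Finset.card) hmem
    rwa [Finset.card_insert_of_notMem hjt] at h1
  omega

/-- Erdős–Szekeres-type extraction: a nonempty index set `s` contains a monotone
chain `t` with `s.card ≤ t.card ^ 2`. -/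
lemma exists_big_chain (a : Fin n → ℝ) (s : Finset (Fin n)) (hs : s.Nonempty) :
    ∃ t : Finset (Fin n), t ⊆ s ∧ t.Nonempty ∧ s.card ≤ t.card * t.card ∧
      (MonotoneOn a ↑t ∨ AntitoneOn a ↑t) := by
  classical
  set f : Fin n → ℕ := chainLen s (IncChain a) with hf
  set g : Fin n → ℕ := chainLen s (DecChain a) with hg
  set u : ℕ := s.sup f with hu
  set d : ℕ := s.sup g with hd
  -- counting: the map i ↦ (f i, g i) is injective on s into Icc 1 u ×ˢ Icc 1 d
  have hcount : s.card ≤ u * d := by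
    have hmaps : ∀ i ∈ s, (f i, g i) ∈ Finset.Icc 1 u ×ˢ Finset.Icc 1 d := by
      intro i hi
      rw [Finset.mem_product, Finset.mem_Icc, Finset.mem_Icc]
      exact ⟨⟨one_le_chainLen_inc hi, Finset.le_sup (f := f) hi⟩,
        ⟨one_le_chainLen_dec hi, Finset.le_sup (f := g) hi⟩⟩
    have hinj : Set.InjOn (fun i => (f i, g i)) ↑s := by
      intro i hi j hj hEq
      by_contra hne
      have key : ∀ x y : Fin n, x ∈ s → y ∈ s → x < y →
          (fun i => (f i, g i)) x ≠ (fun i => (f i, g i)) y := by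
        intro x y hx hy hxy hfg
        rcases lt_or_ge (a x) (a y) with h | h
        · have := chainLen_lt_inc hx hy hxy h
          have : f x ≠ f y := Nat.ne_of_lt this
          exact this (congrArg Prod.fst hfg)
        · have := chainLen_lt_dec hx hy hxy h
          have : g x ≠ g y := Nat.ne_of_lt this
          exact this (congrArg Prod.snd hfg)
      rcases lt_or_gt_of_ne (show i ≠ j from fun h => hne h) with h | h
      · exact key i j hi hj h hEq
      · exact key j i hj hi h hEq.symm
    calc s.card ≤ (Finset.Icc 1 u ×ˢ Finset.Icc 1 d).card :=
          Finset.card_le_card_of_injOn _ hmaps hinj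
      _ = u * d := by rw [Finset.card_product, Nat.card_Icc, Nat.card_Icc, Nat.add_sub_cancel, Nat.add_sub_cancel]
  -- pick the longer of the two longest chains
  obtain ⟨i0, hi0, hfi0⟩ := Finset.exists_mem_eq_sup s hs f
  obtain ⟨j0, hj0, hgj0⟩ := Finset.exists_mem_eq_sup s hs g
  rcases le_total d u with hud | hud
  · obtain ⟨t, ht, hcard⟩ := exists_chain_eq_chainLen (chainsUpTo_nonempty_inc (a := a) hi0)
    rw [mem_chainsUpTo] at ht
    refine ⟨t, ht.1, ⟨i0, ht.2.1⟩, ?_, Or.inl (IncChain.monotoneOn ht.2.2.2)⟩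
    have htu : t.card = u := by rw [hcard, hu, hfi0]
    rw [htu]
    exact hcount.trans (Nat.mul_le_mul_left u hud)
  · obtain ⟨t, ht, hcard⟩ := exists_chain_eq_chainLen (chainsUpTo_nonempty_dec (a := a) hj0)
    rw [mem_chainsUpTo] at ht
    refine ⟨t, ht.1, ⟨j0, ht.2.1⟩, ?_, Or.inr (DecChain.antitoneOn ht.2.2.2)⟩
    have htd : t.card = d := by rw [hcard, hd, hgj0]
    rw [htd]
    exact hcount.trans (Nat.mul_le_mul_right d hud)

/-- The key real-number inequality for the greedy step. -/
lemma key_ineq {m k : ℕ} (hk1 : 1 ≤ k) (hkm : k ≤ m) (h : m ≤ k * k) :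
    1 + 2 * Real.sqrt ((m : ℝ) - k) ≤ 2 * Real.sqrt m := by
  set x : ℝ := Real.sqrt m with hx
  set y : ℝ := Real.sqrt ((m : ℝ) - k) with hy
  have hM0 : (0 : ℝ) ≤ (m : ℝ) := Nat.cast_nonneg m
  have hMK0 : (0 : ℝ) ≤ (m : ℝ) - k := by
    have : (k : ℝ) ≤ m := Nat.cast_le.2 hkm
    linarith
  have hx2 : x ^ 2 = (m : ℝ) := Real.sq_sqrt hM0
  have hy2 : y ^ 2 = (m : ℝ) - k := Real.sq_sqrt hMK0
  have hx0 : 0 ≤ x := Real.sqrt_nonneg _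
  have hy0 : 0 ≤ y := Real.sqrt_nonneg _
  have hyx : y ≤ x := Real.sqrt_le_sqrt (by linarith)
  have hxk : x ≤ (k : ℝ) := by
    rw [hx]
    have : (m : ℝ) ≤ (k : ℝ) * k := by exact_mod_cast Nat.cast_le.2 h
    calc Real.sqrt m ≤ Real.sqrt ((k : ℝ) * k) := Real.sqrt_le_sqrt this
      _ = k := Real.sqrt_mul_self (Nat.cast_nonneg k)
  have hk1' : (1 : ℝ) ≤ k := by exact_mod_cast hk1
  -- (x - y)(x + y) = k, x + y ≤ 2k, so x - y ≥ 1/2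
  nlinarith [sq_nonneg (x - y), sq_nonneg (x + y), mul_nonneg hx0 hy0]

/-- Greedy partition: any index set `s` can be partitioned into at most
`2 √(s.card)` monotone pieces. -/
lemma partition_aux (a : Fin n → ℝ) :
    ∀ m : ℕ, ∀ s : Finset (Fin n), s.card ≤ m →
    ∃ P : Finset (Finset (Fin n)),
      (∀ t ∈ P, t ⊆ s) ∧
      (∀ i ∈ s, ∃! t : Finset (Fin n), t ∈ P ∧ i ∈ t) ∧
      (∀ t ∈ P, MonotoneOn a ↑t ∨ AntitoneOn a ↑t) ∧
      (P.card : ℝ) ≤ 2 * Real.sqrt s.card := by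
  intro m
  induction m with
  | zero =>
    intro s hs
    have : s = ∅ := Finset.card_eq_zero.1 (Nat.le_zero.1 hs)
    subst this
    exact ⟨∅, by simp, by simp, by simp, by simp⟩
  | succ m ih =>
    intro s hs
    rcases Finset.eq_empty_or_nonempty s with rfl | hne
    · exact ⟨∅, by simp, by simp, by simp, by simp⟩
    obtain ⟨t, hts, htne, htcard, htmono⟩ := exists_big_chain a s hne
    have htc1 : 1 ≤ t.card := Finset.card_pos.2 htne
    have htcs : t.card ≤ s.card := Finset.card_le_card hts
    have hsd : (s \ t).card = s.card - t.card := Finset.card_sdiff_of_subset hts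
    have hsd' : (s \ t).card ≤ m := by omega
    obtain ⟨P', hP'sub, hP'uniq, hP'mono, hP'card⟩ := ih (s \ t) hsd'
    refine ⟨insert t P', ?_, ?_, ?_, ?_⟩
    · intro t' ht'
      rcases Finset.mem_insert.1 ht' with rfl | h
      · exact hts
      · exact (hP'sub t' h).trans (Finset.sdiff_subset)
    · intro i hi
      by_cases hit : i ∈ t
      · refine ⟨t, ⟨Finset.mem_insert_self _ _, hit⟩, ?_⟩
        rintro t' ⟨ht', hit'⟩
        rcases Finset.mem_insert.1 ht' with rfl | h
        · rfl
        · exact absurd hit (Finset.mem_sdiff.1 ((hP'sub t' h) hit')).2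
      · have hi' : i ∈ s \ t := Finset.mem_sdiff.2 ⟨hi, hit⟩
        obtain ⟨t', ⟨ht'P, hit'⟩, hun⟩ := hP'uniq i hi'
        refine ⟨t', ⟨Finset.mem_insert_of_mem ht'P, hit'⟩, ?_⟩
        rintro t'' ⟨ht'', hit''⟩
        rcases Finset.mem_insert.1 ht'' with rfl | h
        · exact absurd hit'' hit
        · exact hun t'' ⟨h, hit''⟩
    · intro t' ht'
      rcases Finset.mem_insert.1 ht' with rfl | h
      · exact htmono
      · exact hP'mono t' h
    · have hcard : ((insert t P').card : ℝ) ≤ (P'.card : ℝ) + 1 := by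
        exact_mod_cast Finset.card_insert_le t P'
      have hsub : (((s \ t).card : ℕ) : ℝ) = (s.card : ℝ) - t.card := by
        rw [hsd]; push_cast [Nat.cast_sub htcs]; ring
      have key := key_ineq (m := s.card) (k := t.card) htc1 htcs htcard
      calc ((insert t P').card : ℝ) ≤ (P'.card : ℝ) + 1 := hcard
        _ ≤ 2 * Real.sqrt ((s \ t).card) + 1 := by linarith
        _ = 1 + 2 * Real.sqrt ((s.card : ℝ) - t.card) := by rw [hsub]; ring
        _ ≤ 2 * Real.sqrt s.card := key

end Stmt0Aux

/-- Any finite sequence of `n` real numbers (`n > 0`) can be partitioned into at most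
`(1 + √(3/2)) * √n` monotone subsequences: the index set `Fin n` is partitioned into
classes, each inducing a monotone (non-decreasing or non-increasing) subsequence. -/
theorem stmt_0 (n : ℕ) (hn : 0 < n) (a : Fin n → ℝ) :
    ∃ P : Finset (Finset (Fin n)),
      (∀ i : Fin n, ∃! s : Finset (Fin n), s ∈ P ∧ i ∈ s) ∧
      (∀ s ∈ P, MonotoneOn a ↑s ∨ AntitoneOn a ↑s) ∧
      (P.card : ℝ) ≤ (1 + Real.sqrt (3 / 2)) * Real.sqrt n := by
  obtain ⟨P, hsub, huniq, hmono, hcard⟩ :=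
    Stmt0Aux.partition_aux a n Finset.univ (by simp)
  refine ⟨P, fun i => huniq i (Finset.mem_univ i), hmono, ?_⟩
  have h1 : (1 : ℝ) ≤ Real.sqrt (3 / 2) := by
    rw [show (1 : ℝ) = Real.sqrt 1 from (Real.sqrt_one).symm]
    exact Real.sqrt_le_sqrt (by norm_num)
  have h2 : (0 : ℝ) ≤ Real.sqrt n := Real.sqrt_nonneg _
  have h3 : (Finset.univ : Finset (Fin n)).card = n := by simp
  rw [h3] at hcard
  nlinarith
end

section
/- For all integers n >= 5, with c = 1 + sqrt(3/2), the inequality c * sqrt(n - floor(sqrt(n-1)) - 1) + 1 <= c * sqrt(n) holds. -/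
/-- For all integers `n ≥ 5`, with `c = 1 + √(3/2)`,
`c * √(n - ⌊√(n-1)⌋ - 1) + 1 ≤ c * √n`. -/
theorem stmt_1 (n : ℤ) (hn : 5 ≤ n) :
    (1 + Real.sqrt (3 / 2)) *
        Real.sqrt ((n : ℝ) - (⌊Real.sqrt ((n : ℝ) - 1)⌋ : ℝ) - 1) + 1 ≤
      (1 + Real.sqrt (3 / 2)) * Real.sqrt (n : ℝ) := by
  set m : ℤ := ⌊Real.sqrt ((n : ℝ) - 1)⌋ with hmdef
  set c : ℝ := 1 + Real.sqrt (3 / 2) with hc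
  have hn1 : (1:ℝ) ≤ (n:ℝ) - 1 := by
    have : (5:ℝ) ≤ (n:ℝ) := by exact_mod_cast hn
    linarith
  have hsle : Real.sqrt ((n:ℝ) - 1) ≤ (n:ℝ) - 1 := by
    calc Real.sqrt ((n:ℝ)-1) ≤ Real.sqrt (((n:ℝ)-1)^2) := Real.sqrt_le_sqrt (by nlinarith)
      _ = (n:ℝ) - 1 := Real.sqrt_sq (by linarith)
  have hm0 : (0:ℤ) ≤ m := by
    apply Int.floor_nonneg.mpr (Real.sqrt_nonneg _)
  have hmle : (m:ℝ) ≤ (n:ℝ) - 1 := (Int.floor_le _).trans hsle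
  have hnm0 : (0:ℝ) ≤ (n:ℝ) - (m:ℝ) - 1 := by linarith
  set a : ℝ := Real.sqrt (n:ℝ) with ha
  set b : ℝ := Real.sqrt ((n:ℝ) - (m:ℝ) - 1) with hb
  have ha2 : a ^ 2 = (n:ℝ) := Real.sq_sqrt (by linarith)
  have hb2 : b ^ 2 = (n:ℝ) - (m:ℝ) - 1 := Real.sq_sqrt hnm0
  have ha0 : 0 ≤ a := Real.sqrt_nonneg _
  have hb0 : 0 ≤ b := Real.sqrt_nonneg _
  have ha2' : 2 ≤ a := by
    rw [ha]
    rw [show (2:ℝ) = Real.sqrt 4 by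
      rw [show (4:ℝ) = 2^2 by norm_num, Real.sqrt_sq (by norm_num)]]
    apply Real.sqrt_le_sqrt
    have : (5:ℝ) ≤ (n:ℝ) := by exact_mod_cast hn
    linarith
  -- m+1 ≥ √n
  have hlt : Real.sqrt ((n:ℝ) - 1) < (m:ℝ) + 1 := Int.lt_floor_add_one _
  have hsq : (n:ℝ) - 1 < ((m:ℝ) + 1)^2 := by
    have hpos : (0:ℝ) < (m:ℝ) + 1 := by
      have : (0:ℝ) ≤ (m:ℝ) := by exact_mod_cast hm0
      linarith
    nlinarith [Real.sq_sqrt (by linarith : (0:ℝ) ≤ (n:ℝ) - 1), Real.sqrt_nonneg ((n:ℝ)-1)]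
  have hZ : n ≤ (m + 1)^2 := by
    have : (n:ℝ) - 1 < ((m:ℝ) + 1)^2 := hsq
    have : n - 1 < (m + 1)^2 := by exact_mod_cast (by push_cast; linarith : ((n - 1 : ℤ) : ℝ) < (((m+1)^2 : ℤ) : ℝ))
    omega
  have haM : a ≤ (m:ℝ) + 1 := by
    have hR : (n:ℝ) ≤ ((m:ℝ) + 1)^2 := by exact_mod_cast (by exact_mod_cast hZ : ((n:ℤ):ℝ) ≤ (((m+1)^2 : ℤ) : ℝ))
    rw [ha]
    calc Real.sqrt (n:ℝ) ≤ Real.sqrt (((m:ℝ)+1)^2) := Real.sqrt_le_sqrt hR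
      _ = (m:ℝ) + 1 := Real.sqrt_sq (by positivity)
  have hc2 : 2 ≤ c := by
    have : (1:ℝ) ≤ Real.sqrt (3/2) := by
      rw [show (1:ℝ) = Real.sqrt 1 by simp]
      exact Real.sqrt_le_sqrt (by norm_num)
    rw [hc]; linarith
  -- b ≤ a
  have hba : b ≤ a := by
    nlinarith
  -- a - b ≥ 1/2
  have key : 1/2 ≤ a - b := by
    nlinarith
  nlinarith
end

section
/- Let G = (V, E) be an undirected graph, R a set of reported nodes each with a timestamp t(u), and let t0 be the minimum timestamp among reported nodes, attained at node u0. If T is a tree in G rooted at some node s such that T spans all reported nodes and every path in T starting at s is order-respecting, then the tree T re-rooted at u0 also has the property that every path starting at u0 is order-respecting. -/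
/-- Re-rooting at the earliest reported node preserves order-respecting paths.
`T` is a tree (spanning all nodes, in particular all reported nodes `R`), `t` gives
timestamps, `u0 ∈ R` attains the minimum timestamp.  If every path in `T` from the
root `s` to a reported node `v` contains no reported node with timestamp larger than
`t v`, then the same holds for all paths starting at `u0`. -/
theorem stmt_5 {V : Type*} (T : SimpleGraph V) (hT : T.IsTree)
    (R : Set V) (t : V → ℝ) (s u0 : V)
    (hu0 : u0 ∈ R) (hmin : ∀ v ∈ R, t u0 ≤ t v)
    (horder : ∀ v ∈ R, ∀ p : T.Path s v, ∀ x ∈ p.1.support, x ∈ R → t x ≤ t v) :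
    ∀ v ∈ R, ∀ p : T.Path u0 v, ∀ x ∈ p.1.support, x ∈ R → t x ≤ t v := by
  classical
  intro v hv p x hx hxR
  obtain ⟨hconn, hacyc⟩ := hT
  -- paths from s to u0 and from s to v
  let qsu : T.Path s u0 := (hconn.preconnected s u0).some.toPath
  let qsv : T.Path s v := (hconn.preconnected s v).some.toPath
  -- the walk from u0 to v through s; its bypass is the unique u0-v path
  set w : T.Walk u0 v := qsu.1.reverse.append qsv.1 with hw
  have hpeq : p = ⟨w.bypass, w.bypass_isPath⟩ := hacyc.path_unique _ _
  have hx' : x ∈ w.support := by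
    have := w.support_bypass_subset
    apply this
    rw [hpeq] at hx
    exact hx
  rw [hw, SimpleGraph.Walk.mem_support_append_iff, SimpleGraph.Walk.support_reverse,
    List.mem_reverse] at hx'
  rcases hx' with h | h
  · exact le_trans (horder u0 hu0 qsu x h hxR) (hmin v hv)
  · exact horder v hv qsv x h hxR
end

section
/- In a rooted tree T with root s, for any reported node v, the unique tree path from v to the minimum-timestamp reported node u0 consists of a prefix of the path from v to s followed by a suffix of the path from s to u0, and since all reported nodes on the path from s to u0 have the minimum timestamp t0, this path from v to u0 (viewed from u0 to v) is order-respecting. -/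
open SimpleGraph

private lemma exists_first_aux {V : Type*} {T : SimpleGraph V} {S : Set V} :
    ∀ {v s : V} (w : T.Walk v s), w.IsPath → s ∈ S →
    ∃ (m : V) (p1 : T.Walk v m), p1.IsPath ∧ m ∈ S ∧
      p1.support <+: w.support ∧ (∀ x ∈ p1.support, x ∈ S → x = m) := by
  intro v s w
  induction w with
  | nil =>
    intro _ hs
    exact ⟨_, Walk.nil, by simp, hs, by simp, by simp⟩
  | @cons a b c h p ih =>
    intro hp hs
    by_cases hvS : a ∈ S
    · refine ⟨a, Walk.nil, by simp, hvS, ?_, by simp⟩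
      simp [Walk.support_cons]
    · obtain ⟨m, p1, hp1, hmS, hpre, hmem⟩ := ih (hp.of_cons) hs
      have hna : a ∉ p1.support := fun hx =>
        (hp.support_nodup.notMem) (hpre.subset hx)
      refine ⟨m, Walk.cons h p1, hp1.cons hna, hmS, ?_, ?_⟩
      · obtain ⟨tl, htl⟩ := hpre
        exact ⟨tl, by simp [Walk.support_cons, htl]⟩
      · intro x hx hxS
        rcases (by simpa [Walk.support_cons] using hx) with rfl | hx'
        · exact absurd hxS hvS
        · exact hmem x hx' hxS

/-- In a tree `T` rooted at `s` whose root-to-reported-node paths are all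
order-respecting, for any reported node `v` the tree path from `v` to the
minimum-timestamp reported node `u0` is a prefix of the path from `v` to `s`
followed by a suffix of the path from `s` to `u0`; all reported nodes on the
path from `s` to `u0` have the minimum timestamp `t u0`, and the path from `v`
to `u0` (viewed from `u0` to `v`) is order-respecting. -/
theorem stmt_6 {V : Type*} (T : SimpleGraph V) (hT : T.IsTree)
    (R : Set V) (t : V → ℝ) (s u0 : V)
    (hu0 : u0 ∈ R) (hmin : ∀ v ∈ R, t u0 ≤ t v)
    (horder : ∀ v' ∈ R, ∀ p : T.Path s v', ∀ x ∈ p.1.support, x ∈ R → t x ≤ t v')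
    (v : V) (hv : v ∈ R)
    (pvu : T.Path v u0) (pvs : T.Path v s) (psu : T.Path s u0) :
    (∃ (m : V) (p1 : T.Walk v m) (p2 : T.Walk m u0),
        pvu.1 = p1.append p2 ∧
        p1.support <+: pvs.1.support ∧
        p2.support <:+ psu.1.support) ∧
    (∀ x ∈ psu.1.support, x ∈ R → t x = t u0) ∧
    (∀ x ∈ pvu.1.support, x ∈ R → t x ≤ t v) := by
  classical
  -- find the first vertex m of pvs that lies on psu
  obtain ⟨m, p1, hp1, hmS, hpre, hmem⟩ :=
    exists_first_aux (S := {x | x ∈ psu.1.support}) pvs.1 pvs.2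
      (by simp [Walk.start_mem_support])
  set p2 : T.Walk m u0 := psu.1.dropUntil m hmS with hp2def
  have hp2 : p2.IsPath := psu.2.dropUntil hmS
  -- support of p2 is a suffix of psu's support
  have hsuf : p2.support <:+ psu.1.support := by
    have hspec := psu.1.take_spec hmS
    have : psu.1.support = (psu.1.takeUntil m hmS).support ++ p2.support.tail := by
      conv_lhs => rw [← hspec]
      rw [Walk.support_append]
    have hlast : (psu.1.takeUntil m hmS).support.getLast (by simp) = m :=
      Walk.getLast_support _
    have hne : (psu.1.takeUntil m hmS).support ≠ [] := by simp
    refine ⟨(psu.1.takeUntil m hmS).support.dropLast, ?_⟩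
    rw [this]
    conv_rhs => rw [← List.dropLast_append_getLast hne, hlast]
    rw [List.append_assoc]
    congr 1
    simpa using Walk.support_eq_cons p2
  -- the appended walk is a path
  have hdisj : ∀ x ∈ p1.support, x ∈ p2.support.tail → False := by
    intro x hx1 hx2
    have hx2' : x ∈ psu.1.support :=
      Walk.support_dropUntil_subset _ hmS (List.mem_of_mem_tail hx2)
    have : x = m := hmem x hx1 hx2'
    subst this
    have := hp2.support_nodup
    rw [Walk.support_eq_cons p2] at this
    exact this.notMem hx2
  have happ : (p1.append p2).IsPath := by
    rw [Walk.isPath_def, Walk.support_append]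
    refine List.Nodup.append hp1.support_nodup ?_ ?_
    · exact (Walk.support_eq_cons p2 ▸ hp2.support_nodup).of_cons
    · intro x hx1 hx2
      exact hdisj x hx1 hx2
  -- uniqueness of paths in a tree
  have huniq := hT.existsUnique_path v u0
  have hpvu : pvu.1 = p1.append p2 :=
    huniq.unique pvu.2 happ
  refine ⟨⟨m, p1, p2, hpvu, hpre, hsuf⟩, ?_, ?_⟩
  · intro x hx hxR
    exact le_antisymm (horder u0 hu0 psu x hx hxR) (hmin x hxR)
  · intro x hx hxR
    rw [hpvu, Walk.support_append] at hx
    rcases List.mem_append.1 hx with hx1 | hx2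
    · have hxs : x ∈ pvs.1.support := hpre.subset hx1
      have : x ∈ pvs.1.reverse.support := by
        rw [Walk.support_reverse]; simpa using hxs
      exact horder v hv ⟨pvs.1.reverse, pvs.2.reverse⟩ x this hxR
    · have hxs : x ∈ psu.1.support :=
        Walk.support_dropUntil_subset _ hmS (List.mem_of_mem_tail hx2)
      have : t x = t u0 := le_antisymm (horder u0 hu0 psu x hxs hxR) (hmin x hxR)
      rw [this]; exact hmin v hv
end
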